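/- If 0 < ω < ω_{p,q}, then there exist real numbers 0 < β < θ such that F(u) < 0 for u ∈ (0,β), F(β) = 0, F(u) > 0 for u ∈ (β,θ), F(θ) = 0, and F(u) < 0 for u ∈ (θ,∞). -/

import Mathlib

/-!
For `u > 0` we have `F(u) = u² (h(u) - ω/2)` with `h(u) = u^{p-1}/(p+1) - u^{q-1}/(q+1)`, so the
sign of `F` is that of `h - ω/2`. Since `h'(u) = u^{p-2} ((p-1)/(p+1) - (q-1)/(q+1) u^{q-p})`, `h`
increases up to the point `A` with `A^{q-p} = (p-1)(q+1)/((p+1)(q-1))` and decreases after it, and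
a computation gives `2 h(A) = ω_{p,q}`. As `h(0⁺) = 0 < ω/2` and `h(u) → -∞`, the hypothesis
`ω < ω_{p,q}` makes `h - ω/2` cross zero exactly once on each side of `A`.
-/

/-- The primitive `F(u) = -(ω/2)u² + u^{p+1}/(p+1) - u^{q+1}/(q+1)`. -/
noncomputable def F (ω p q u : ℝ) : ℝ :=
  -(ω / 2) * u ^ 2 + u ^ (p + 1) / (p + 1) - u ^ (q + 1) / (q + 1)

/-- The critical frequency `ω_{p,q}`. -/
noncomputable def omegaPQ (p q : ℝ) : ℝ :=
  (2 * (q - p) / ((p + 1) * (q - 1))) *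
    (((p - 1) * (q + 1)) / ((p + 1) * (q - 1))) ^ ((p - 1) / (q - p))

open Set Filter Topology

section Crossing

variable {g : ℝ → ℝ} {a c y : ℝ}

theorem exists_crossing_of_strictMonoOn (hac : a < c) (hcont : ContinuousOn g (Ioc a c))
    (hmono : StrictMonoOn g (Ioc a c)) (hc : y < g c) (hleft : ∀ᶠ x in 𝓝[>] a, g x < y) :
    ∃ β ∈ Ioo a c, g β = y ∧ (∀ u ∈ Ioo a β, g u < y) ∧ ∀ u ∈ Ioc β c, y < g u := by
  obtain ⟨x, hgx, hx⟩ := (hleft.and (Ioo_mem_nhdsGT hac)).exists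
  obtain ⟨β, hβ, hgβ⟩ : ∃ β ∈ Ioo x c, g β = y :=
    intermediate_value_Ioo hx.2.le (hcont.mono (Icc_subset_Ioc hx.1 le_rfl)) ⟨hgx, hc⟩
  have hβ' : β ∈ Ioc a c := ⟨hx.1.trans hβ.1, hβ.2.le⟩
  refine ⟨β, ⟨hβ'.1, hβ.2⟩, hgβ, fun u hu => ?_, fun u hu => ?_⟩
  · exact hgβ ▸ hmono ⟨hu.1, hu.2.le.trans hβ'.2⟩ hβ' hu.2
  · exact hgβ ▸ hmono hβ' ⟨hβ'.1.trans hu.1, hu.2⟩ hu.1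

theorem exists_crossing_of_strictAntiOn (hcont : ContinuousOn g (Ici c))
    (hanti : StrictAntiOn g (Ici c)) (hc : y < g c) (hright : ∀ᶠ x in atTop, g x < y) :
    ∃ θ, c < θ ∧ g θ = y ∧ (∀ u ∈ Ico c θ, y < g u) ∧ ∀ u, θ < u → g u < y := by
  obtain ⟨x, hgx, hx⟩ := (hright.and (eventually_gt_atTop c)).exists
  obtain ⟨θ, hθ, hgθ⟩ : ∃ θ ∈ Ioo c x, g θ = y :=
    intermediate_value_Ioo' hx.le (hcont.mono Icc_subset_Ici_self) ⟨hgx, hc⟩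
  have hθ' : θ ∈ Ici c := hθ.1.le
  refine ⟨θ, hθ.1, hgθ, fun u hu => ?_, fun u hu => ?_⟩
  · exact hgθ ▸ hanti hu.1 hθ' hu.2
  · exact hgθ ▸ hanti hθ' (hθ'.trans hu.le) hu

theorem exists_crossings_of_unimodal (hac : a < c) (hcont : ContinuousOn g (Ioi a))
    (hmono : StrictMonoOn g (Ioc a c)) (hanti : StrictAntiOn g (Ici c)) (hc : y < g c)
    (hleft : ∀ᶠ x in 𝓝[>] a, g x < y) (hright : ∀ᶠ x in atTop, g x < y) :
    ∃ β θ, a < β ∧ β < θ ∧ (∀ u, a < u → u < β → g u < y) ∧ g β = y ∧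
      (∀ u, β < u → u < θ → y < g u) ∧ g θ = y ∧ ∀ u, θ < u → g u < y := by
  obtain ⟨β, hβ, hgβ, hbelow, hincr⟩ := exists_crossing_of_strictMonoOn hac
    (hcont.mono Ioc_subset_Ioi_self) hmono hc hleft
  obtain ⟨θ, hθ, hgθ, hdecr, habove⟩ := exists_crossing_of_strictAntiOn
    (hcont.mono (Ici_subset_Ioi.2 hac)) hanti hc hright
  refine ⟨β, θ, hβ.1, hβ.2.trans hθ, fun u hu huβ => hbelow u ⟨hu, huβ⟩, hgβ,
    fun u hβu huθ => ?_, hgθ, habove⟩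
  rcases le_or_gt u c with huc | hcu
  · exact hincr u ⟨hβu, huc⟩
  · exact hdecr u ⟨hcu.le, huθ⟩

end Crossing

section RpowDiff

noncomputable def rpowDiff (a b r s u : ℝ) : ℝ := a * u ^ r - b * u ^ s

noncomputable def rpowDiffArgmax (a b r s : ℝ) : ℝ := (a * r / (b * s)) ^ (s - r)⁻¹

variable {a b r s : ℝ}

theorem hasDerivAt_rpowDiff {u : ℝ} (hu : 0 < u) :
    HasDerivAt (rpowDiff a b r s) (u ^ (r - 1) * (a * r - b * s * u ^ (s - r))) u := by
  have hr := (Real.hasDerivAt_rpow_const (p := r) (Or.inl hu.ne')).const_mul a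
  have hs := (Real.hasDerivAt_rpow_const (p := s) (Or.inl hu.ne')).const_mul b
  refine (hr.sub hs).congr_deriv ?_
  rw [show s - 1 = (r - 1) + (s - r) by ring, Real.rpow_add hu]
  ring

theorem continuousOn_rpowDiff : ContinuousOn (rpowDiff a b r s) (Ioi 0) :=
  fun _ hu => (hasDerivAt_rpowDiff hu).continuousAt.continuousWithinAt

theorem tendsto_rpowDiff_nhds_zero (hr : 0 < r) (hs : 0 < s) :
    Tendsto (rpowDiff a b r s) (𝓝 0) (𝓝 0) := by
  have hcont : ContinuousAt (rpowDiff a b r s) 0 :=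
    (continuousAt_const.mul (Real.continuousAt_rpow_const 0 r (Or.inr hr.le))).sub
      (continuousAt_const.mul (Real.continuousAt_rpow_const 0 s (Or.inr hs.le)))
  simpa [rpowDiff, Real.zero_rpow hr.ne', Real.zero_rpow hs.ne'] using hcont.tendsto

theorem eventually_rpowDiff_neg (hb : 0 < b) (hrs : r < s) :
    ∀ᶠ u in atTop, rpowDiff a b r s u < 0 := by
  filter_upwards [(tendsto_rpow_atTop (sub_pos.2 hrs)).eventually_gt_atTop (a / b),
    eventually_gt_atTop 0] with u hlarge hu
  have hsplit : rpowDiff a b r s u = u ^ r * (a - b * u ^ (s - r)) := by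
    rw [rpowDiff, show s = r + (s - r) by ring, Real.rpow_add hu, add_sub_cancel]
    ring
  rw [hsplit]
  exact mul_neg_of_pos_of_neg (Real.rpow_pos_of_pos hu r)
    (by linarith [(div_lt_iff₀' hb).1 hlarge])

variable (ha : 0 < a) (hb : 0 < b) (hr : 0 < r) (hrs : r < s)
include ha hb hr hrs

theorem rpowDiffArgmax_pos : 0 < rpowDiffArgmax a b r s := by
  unfold rpowDiffArgmax
  have : 0 < s := hr.trans hrs
  positivity

theorem rpowDiffArgmax_rpow :
    rpowDiffArgmax a b r s ^ (s - r) = a * r / (b * s) := by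
  have : 0 < s := hr.trans hrs
  exact Real.rpow_inv_rpow (by positivity) (sub_pos.2 hrs).ne'

theorem strictMonoOn_rpowDiff :
    StrictMonoOn (rpowDiff a b r s) (Ioc 0 (rpowDiffArgmax a b r s)) := by
  refine strictMonoOn_of_deriv_pos (convex_Ioc _ _)
    (continuousOn_rpowDiff.mono Ioc_subset_Ioi_self) fun u hu => ?_
  rw [interior_Ioc] at hu
  rw [(hasDerivAt_rpowDiff hu.1).deriv]
  have hlt : u ^ (s - r) < a * r / (b * s) := by
    rw [← rpowDiffArgmax_rpow ha hb hr hrs]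
    exact Real.rpow_lt_rpow hu.1.le hu.2 (sub_pos.2 hrs)
  have hbs : 0 < b * s := mul_pos hb (hr.trans hrs)
  rw [lt_div_iff₀ hbs] at hlt
  exact mul_pos (Real.rpow_pos_of_pos hu.1 _) (by linarith)

theorem strictAntiOn_rpowDiff :
    StrictAntiOn (rpowDiff a b r s) (Ici (rpowDiffArgmax a b r s)) := by
  have hA := rpowDiffArgmax_pos ha hb hr hrs
  refine strictAntiOn_of_deriv_neg (convex_Ici _)
    (continuousOn_rpowDiff.mono (Ici_subset_Ioi.2 hA)) fun u hu => ?_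
  rw [interior_Ici] at hu
  have hu0 : 0 < u := hA.trans hu
  rw [(hasDerivAt_rpowDiff hu0).deriv]
  have hgt : a * r / (b * s) < u ^ (s - r) := by
    rw [← rpowDiffArgmax_rpow ha hb hr hrs]
    exact Real.rpow_lt_rpow hA.le hu (sub_pos.2 hrs)
  have hbs : 0 < b * s := mul_pos hb (hr.trans hrs)
  rw [div_lt_iff₀ hbs] at hgt
  exact mul_neg_of_pos_of_neg (Real.rpow_pos_of_pos hu0 _) (by linarith)

theorem rpowDiff_rpowDiffArgmax :
    rpowDiff a b r s (rpowDiffArgmax a b r s) =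
      a * (s - r) / s * (a * r / (b * s)) ^ (r / (s - r)) := by
  have hA := rpowDiffArgmax_pos ha hb hr hrs
  have hs : 0 < s := hr.trans hrs
  have hAs : rpowDiffArgmax a b r s ^ s =
      rpowDiffArgmax a b r s ^ r * (a * r / (b * s)) := by
    rw [← rpowDiffArgmax_rpow ha hb hr hrs, ← Real.rpow_add hA, add_sub_cancel]
  have hAr : rpowDiffArgmax a b r s ^ r = (a * r / (b * s)) ^ (r / (s - r)) := by
    rw [rpowDiffArgmax, ← Real.rpow_mul (by positivity), inv_mul_eq_div]
  rw [rpowDiff, hAs, ← hAr]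
  field_simp

end RpowDiff

theorem F_eq_sq_mul {ω p q u : ℝ} (hu : 0 < u) :
    F ω p q u = u ^ 2 * (rpowDiff (p + 1)⁻¹ (q + 1)⁻¹ (p - 1) (q - 1) u - ω / 2) := by
  have hsq : ∀ t : ℝ, u ^ (t + 1) = u ^ (t - 1) * u ^ 2 := fun t => by
    rw [show t + 1 = (t - 1) + 2 by ring, Real.rpow_add hu, Real.rpow_two]
  rw [F, rpowDiff, hsq p, hsq q]
  ring

theorem two_mul_rpowDiff_rpowDiffArgmax {p q : ℝ} (hp : 1 < p) (hpq : p < q) :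
    2 * rpowDiff (p + 1)⁻¹ (q + 1)⁻¹ (p - 1) (q - 1)
      (rpowDiffArgmax (p + 1)⁻¹ (q + 1)⁻¹ (p - 1) (q - 1)) = omegaPQ p q := by
  have hp1 : 0 < p + 1 := by linarith
  have hq1 : 0 < q + 1 := by linarith
  have hbase : (p + 1)⁻¹ * (p - 1) / ((q + 1)⁻¹ * (q - 1)) =
      (p - 1) * (q + 1) / ((p + 1) * (q - 1)) := by
    field_simp
  rw [rpowDiff_rpowDiffArgmax (by positivity) (by positivity) (by linarith) (by linarith),
    omegaPQ, show q - 1 - (p - 1) = q - p by ring, hbase]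
  field_simp

/-- If `0 < ω < ω_{p,q}`, then there exist `0 < β < θ` such that `F < 0` on `(0,β)`,
`F(β) = 0`, `F > 0` on `(β,θ)`, `F(θ) = 0`, and `F < 0` on `(θ,∞)`. -/
theorem F_sign_structure (p q ω : ℝ) (hp : 1 < p) (hpq : p < q) (hω : 0 < ω)
    (hωpq : ω < omegaPQ p q) :
    ∃ β θ : ℝ, 0 < β ∧ β < θ ∧
      (∀ u, 0 < u → u < β → F ω p q u < 0) ∧
      F ω p q β = 0 ∧
      (∀ u, β < u → u < θ → 0 < F ω p q u) ∧
      F ω p q θ = 0 ∧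
      (∀ u, θ < u → F ω p q u < 0) := by
  have ha : 0 < (p + 1)⁻¹ := inv_pos.2 (by linarith)
  have hb : 0 < (q + 1)⁻¹ := inv_pos.2 (by linarith)
  have hr : 0 < p - 1 := by linarith
  have hrs : p - 1 < q - 1 := by linarith
  have hpeak := two_mul_rpowDiff_rpowDiffArgmax hp hpq
  have hleft : ∀ᶠ u in 𝓝[>] 0, rpowDiff (p + 1)⁻¹ (q + 1)⁻¹ (p - 1) (q - 1) u < ω / 2 :=
    nhdsWithin_le_nhds <|
      (tendsto_rpowDiff_nhds_zero hr (hr.trans hrs)).eventually (gt_mem_nhds (half_pos hω))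
  obtain ⟨β, θ, hβ, hβθ, hbelow, hgβ, hbetween, hgθ, habove⟩ :=
    exists_crossings_of_unimodal (rpowDiffArgmax_pos ha hb hr hrs) continuousOn_rpowDiff
      (strictMonoOn_rpowDiff ha hb hr hrs) (strictAntiOn_rpowDiff ha hb hr hrs)
      (by linarith) hleft
      ((eventually_rpowDiff_neg hb hrs).mono fun u hu => hu.trans (half_pos hω))
  have hθ := hβ.trans hβθ
  refine ⟨β, θ, hβ, hβθ, fun u hu huβ => ?_, ?_, fun u hβu huθ => ?_, ?_, fun u hθu => ?_⟩
  · rw [F_eq_sq_mul hu]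
    exact mul_neg_of_pos_of_neg (pow_pos hu 2) (sub_neg.2 (hbelow u hu huβ))
  · rw [F_eq_sq_mul hβ, hgβ, sub_self, mul_zero]
  · rw [F_eq_sq_mul (hβ.trans hβu)]
    exact mul_pos (pow_pos (hβ.trans hβu) 2) (sub_pos.2 (hbetween u hβu huθ))
  · rw [F_eq_sq_mul hθ, hgθ, sub_self, mul_zero]
  · rw [F_eq_sq_mul (hθ.trans hθu)]
    exact mul_neg_of_pos_of_neg (pow_pos (hθ.trans hθu) 2) (sub_neg.2 (habove u hθu))
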